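/- Let H_A, H_B ∈ ℝ^{n×n} be symmetric, W = W_r(H_A,H_B) the joint numerical range (assumed convex and compact), and t_* ∈ [0,1] a maximizer of φ(t) = Σ_{i=1}^r λ_i(t H_A + (1−t)H_B) over [0,1]. Suppose y_* = (Tr(U_*ᵀ H_A U_*), Tr(U_*ᵀ H_B U_*)) ∈ W attains min_{y ∈ W} max{y₁,y₂} for some U_* ∈ 𝕆^{n×r}. Then t_*·y_{*1} + (1−t_*)·y_{*2} = φ(t_*), i.e., Tr(U_*ᵀ (t_* H_A + (1−t_*) H_B) U_*) equals the sum of the r smallest eigenvalues of t_* H_A + (1−t_*) H_B. -/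

import Mathlib

/-!
By Ky Fan's principle, `φ(t) = min_U Tr(Uᵀ (t H_A + (1 - t) H_B) U) = min_{y ∈ W} (t y₁ + (1 - t) y₂)`,
and each of these minima is at most `φ(t_*)`. Separating the convex compact set `W` from the
quadrant `{y₁ ≤ φ(t_*), y₂ ≤ φ(t_*)}` therefore yields a point of `W` with `max y₁ y₂ ≤ φ(t_*)`,
so `max y_* ≤ φ(t_*)` by minimality of `y_*`. Then
`φ(t_*) ≤ t_* y_{*1} + (1 - t_*) y_{*2} ≤ max y_* ≤ φ(t_*)`.
-/

open Matrix BigOperators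

/-- The eigenvalues of a real symmetric matrix, sorted in increasing order. -/
noncomputable def sortedEigenvalues {n : ℕ} (M : Matrix (Fin n) (Fin n) ℝ)
    (hM : M.IsHermitian) : Fin n → ℝ :=
  hM.eigenvalues ∘ Tuple.sort hM.eigenvalues

lemma comb_isHermitian {n : ℕ} (HA HB : Matrix (Fin n) (Fin n) ℝ)
    (hA : HA.IsHermitian) (hB : HB.IsHermitian) (t : ℝ) :
    (t • HA + (1 - t) • HB).IsHermitian := by
  have hA' : HAᵀ = HA := by
    rw [← Matrix.conjTranspose_eq_transpose_of_trivial]; exact hA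
  have hB' : HBᵀ = HB := by
    rw [← Matrix.conjTranspose_eq_transpose_of_trivial]; exact hB
  unfold Matrix.IsHermitian
  simp [Matrix.conjTranspose_add, Matrix.conjTranspose_smul,
    Matrix.conjTranspose_eq_transpose_of_trivial, hA', hB']

open Finset in
theorem sum_le_sum_mul_of_threshold {ι : Type*} [Fintype ι] (F : Finset ι) (e u : ι → ℝ)
    (c : ℝ) (he_in : ∀ i ∈ F, e i ≤ c) (he_out : ∀ i ∉ F, c ≤ e i)
    (hu : ∀ i, u i ∈ Set.Icc (0 : ℝ) 1) (hsum : ∑ i, u i = #F) :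
    ∑ i ∈ F, e i ≤ ∑ i, e i * u i := by
  classical
  set χ : ι → ℝ := fun i => if i ∈ F then 1 else 0
  have hχ : ∑ i, χ i = #F := by simp [χ]
  have hF : ∑ i ∈ F, e i = ∑ i, e i * χ i := by simp [χ, mul_ite]
  -- the excess is `∑ (e i - c) (u i - χ i)` because `u` and `χ` have the same total mass
  have hdiff : ∑ i, e i * u i - ∑ i, e i * χ i = ∑ i, (e i - c) * (u i - χ i) := by
    simp only [sub_mul, mul_sub, sum_sub_distrib, ← mul_sum, hsum, hχ]
    ring
  have hterm : ∀ i, 0 ≤ (e i - c) * (u i - χ i) := by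
    intro i
    by_cases hi : i ∈ F
    · simpa [χ, hi] using mul_nonneg_of_nonpos_of_nonpos (sub_nonpos.2 (he_in i hi))
        (sub_nonpos.2 (hu i).2)
    · simpa [χ, hi] using mul_nonneg (sub_nonneg.2 (he_out i hi)) (hu i).1
  linarith [sum_nonneg fun i (_ : i ∈ univ) => hterm i]

theorem sum_castLE_le_sum_mul_of_monotone {n r : ℕ} (hr : r ≤ n) {e : Fin n → ℝ}
    (he : Monotone e) (u : Fin n → ℝ) (hu : ∀ i, u i ∈ Set.Icc (0 : ℝ) 1)
    (hsum : ∑ i, u i = r) :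
    ∑ i : Fin r, e (Fin.castLE hr i) ≤ ∑ i, e i * u i := by
  obtain _ | n := n
  · obtain rfl : r = 0 := by omega
    simp
  set F := (Finset.univ : Finset (Fin r)).map (Fin.castLEEmb hr)
  have hmemF : ∀ i : Fin (n + 1), i ∈ F ↔ (i : ℕ) < r := fun i => by
    simp only [F, Finset.mem_map, Finset.mem_univ, true_and, Fin.coe_castLEEmb]
    exact ⟨by rintro ⟨j, rfl⟩; exact j.isLt, fun hi => ⟨⟨i, hi⟩, rfl⟩⟩
  have key := sum_le_sum_mul_of_threshold F e u (e ⟨r - 1, by omega⟩)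
    (fun i hi => he (by have := (hmemF i).1 hi; simp [Fin.le_def]; omega))
    (fun i hi => he (by have := (hmemF i).not.1 hi; simp [Fin.le_def]; omega))
    hu (by simpa [F] using hsum)
  simpa [F] using key

theorem Matrix.IsHermitian.exists_orthogonal_diagonalization {n : Type*} [Fintype n]
    [DecidableEq n] {M : Matrix n n ℝ} (hM : M.IsHermitian) :
    ∃ Q : Matrix n n ℝ, Qᵀ * Q = 1 ∧ Q * Qᵀ = 1 ∧ Qᵀ * M * Q = diagonal hM.eigenvalues := by
  have hstar : star (hM.eigenvectorUnitary : Matrix n n ℝ) = (hM.eigenvectorUnitary)ᵀ := by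
    rw [star_eq_conjTranspose, conjTranspose_eq_transpose_of_trivial]
  refine ⟨hM.eigenvectorUnitary, ?_, ?_, ?_⟩
  · rw [← hstar]; exact Unitary.coe_star_mul_self _
  · rw [← hstar]; exact Unitary.coe_mul_star_self _
  · rw [← hstar]
    simpa using hM.conjStarAlgAut_star_eigenvectorUnitary

theorem Matrix.diag_mem_Icc_of_isIdempotentElem {n : Type*} [Fintype n] {P : Matrix n n ℝ}
    (hP : IsIdempotentElem P) (hPt : Pᵀ = P) (i : n) : P i i ∈ Set.Icc (0 : ℝ) 1 := by
  have hsq : P i i ^ 2 ≤ P i i :=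
    calc P i i ^ 2 ≤ ∑ j, P i j ^ 2 :=
          Finset.single_le_sum (f := fun j => P i j ^ 2) (fun j _ => sq_nonneg _)
            (Finset.mem_univ i)
      _ = (P * P) i i := by
          simp only [mul_apply, sq]
          exact Finset.sum_congr rfl fun j _ => by rw [← transpose_apply P j i, hPt]
      _ = P i i := by rw [hP.eq]
  constructor <;> nlinarith

theorem Matrix.trace_transpose_mul_diagonal_mul {m n : Type*} [Fintype m] [Fintype n]
    [DecidableEq n] (V : Matrix n m ℝ) (d : n → ℝ) :
    trace (Vᵀ * diagonal d * V) = ∑ k, d k * (V * Vᵀ) k k := by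
  rw [trace_mul_cycle, trace]
  simp [mul_comm]

-- In the eigenbasis the trace is `∑ λₖ Pₖₖ` for the rank-`r` orthogonal projection `P = V Vᵀ`,
-- whose diagonal entries are weights in `[0, 1]` of total mass `r`.
theorem sum_sortedEigenvalues_le_trace {n r : ℕ} (hr : r ≤ n) {M : Matrix (Fin n) (Fin n) ℝ}
    (hM : M.IsHermitian) {U : Matrix (Fin n) (Fin r) ℝ} (hU : Uᵀ * U = 1) :
    ∑ i : Fin r, sortedEigenvalues M hM (Fin.castLE hr i) ≤ trace (Uᵀ * M * U) := by
  obtain ⟨Q, -, hQ₂, hQM⟩ := hM.exists_orthogonal_diagonalization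
  set V := Qᵀ * U
  set P := V * Vᵀ
  have hV : Vᵀ * V = 1 := by
    simp only [V, transpose_mul, transpose_transpose, Matrix.mul_assoc,
      ← Matrix.mul_assoc Q, hQ₂, Matrix.one_mul, hU]
  have htrace : trace (Uᵀ * M * U) = ∑ k, hM.eigenvalues k * P k k := by
    rw [← trace_transpose_mul_diagonal_mul, ← hQM]
    simp only [V, transpose_mul, transpose_transpose, Matrix.mul_assoc]
    simp only [← Matrix.mul_assoc Q, hQ₂, Matrix.one_mul]
  have hPdiag : ∀ k, P k k ∈ Set.Icc (0 : ℝ) 1 :=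
    Matrix.diag_mem_Icc_of_isIdempotentElem
      (by simp only [IsIdempotentElem, P, Matrix.mul_assoc, ← Matrix.mul_assoc Vᵀ, hV,
        Matrix.one_mul])
      (by simp [P])
  have hPtrace : ∑ k, P k k = r := by
    change trace P = r
    rw [trace_mul_comm, hV, trace_one, Fintype.card_fin]
  set σ := Tuple.sort hM.eigenvalues
  rw [htrace, ← Equiv.sum_comp σ]
  exact sum_castLE_le_sum_mul_of_monotone hr (Tuple.monotone_sort _) _ (fun k => hPdiag _)
    (by rw [Equiv.sum_comp σ (fun k => P k k), hPtrace])

theorem exists_trace_eq_sum_sortedEigenvalues {n r : ℕ} (hr : r ≤ n)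
    {M : Matrix (Fin n) (Fin n) ℝ} (hM : M.IsHermitian) :
    ∃ U : Matrix (Fin n) (Fin r) ℝ, Uᵀ * U = 1 ∧
      trace (Uᵀ * M * U) = ∑ i : Fin r, sortedEigenvalues M hM (Fin.castLE hr i) := by
  obtain ⟨Q, hQ₁, -, hQM⟩ := hM.exists_orthogonal_diagonalization
  -- the eigenvectors of the `r` smallest eigenvalues
  set p : Fin r → Fin n := Tuple.sort hM.eigenvalues ∘ Fin.castLE hr
  have hp : Function.Injective p := (Equiv.injective _).comp (Fin.castLE_injective hr)
  have hsub : ∀ N : Matrix (Fin n) (Fin n) ℝ,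
      (Q.submatrix id p)ᵀ * N * Q.submatrix id p = (Qᵀ * N * Q).submatrix p p := fun N => by
    rw [transpose_submatrix, submatrix_mul _ _ _ id _ Function.bijective_id,
      submatrix_mul _ _ _ id _ Function.bijective_id, submatrix_id_id]
  refine ⟨Q.submatrix id p, ?_, ?_⟩
  · simpa [hQ₁, submatrix_one _ hp] using hsub 1
  · rw [hsub, hQM, submatrix_diagonal _ _ hp, trace_diagonal]
    rfl

theorem ContinuousLinearMap.apply_prod_eq (f : ℝ × ℝ →L[ℝ] ℝ) (y : ℝ × ℝ) :
    f y = f (1, 0) * y.1 + f (0, 1) * y.2 := by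
  conv_lhs => rw [show y = y.1 • ((1 : ℝ), (0 : ℝ)) + y.2 • ((0 : ℝ), (1 : ℝ)) by ext <;> simp]
  rw [map_add, map_smul, map_smul, smul_eq_mul, smul_eq_mul, mul_comm, mul_comm y.2]

theorem nonpos_of_forall_lt_sub_mul {a p v : ℝ} (h : ∀ s : ℝ, 0 ≤ s → v < a - s * p) :
    p ≤ 0 := by
  by_contra! hp
  have := h ((a - v) / p) (div_nonneg (by linarith [h 0 le_rfl]) hp.le)
  rw [div_mul_cancel₀ _ hp.ne'] at this
  linarith

theorem exists_mem_max_le_of_forall_combo_le {W : Set (ℝ × ℝ)} (hconv : Convex ℝ W)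
    (hcomp : IsCompact W) {m : ℝ}
    (h : ∀ t ∈ Set.Icc (0 : ℝ) 1, ∃ y ∈ W, t * y.1 + (1 - t) * y.2 ≤ m) :
    ∃ y ∈ W, max y.1 y.2 ≤ m := by
  by_contra! hW
  have hdisj : Disjoint W (Set.Iic m ×ˢ Set.Iic m) :=
    Set.disjoint_left.2 fun y hy ⟨hy₁, hy₂⟩ => (hW y hy).not_ge (max_le hy₁ hy₂)
  obtain ⟨f, u, v, hfW, huv, hfQ⟩ := geometric_hahn_banach_compact_closed hconv hcomp
    ((convex_Iic m).prod (convex_Iic m)) (isClosed_Iic.prod isClosed_Iic) hdisj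
  obtain ⟨p, q, hf⟩ : ∃ p q : ℝ, ∀ y, f y = p * y.1 + q * y.2 := ⟨_, _, f.apply_prod_eq⟩
  -- `f` is bounded below on the quadrant, so both of its coefficients are nonpositive
  have hp : p ≤ 0 := nonpos_of_forall_lt_sub_mul (a := f (m, m)) (v := v) fun s hs => by
    have := hfQ (m - s, m) ⟨by simpa using hs, Set.mem_Iic.2 le_rfl⟩
    rw [hf] at this ⊢; linarith
  have hq : q ≤ 0 := nonpos_of_forall_lt_sub_mul (a := f (m, m)) (v := v) fun s hs => by
    have := hfQ (m, m - s) ⟨Set.mem_Iic.2 le_rfl, by simpa using hs⟩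
    rw [hf] at this ⊢; linarith
  have hfmm : v < (p + q) * m := by
    have := hfQ (m, m) ⟨Set.mem_Iic.2 le_rfl, Set.mem_Iic.2 le_rfl⟩
    rw [hf] at this; linarith
  obtain ⟨y₀, hy₀, -⟩ := h 0 ⟨le_rfl, zero_le_one⟩
  have hpq : p + q < 0 := by
    refine (add_nonpos hp hq).lt_of_ne fun hpq => ?_
    have := hfW y₀ hy₀
    rw [hf, show p = 0 by linarith, show q = 0 by linarith] at this
    rw [hpq] at hfmm
    linarith
  set t := p / (p + q)
  have ht : t * (p + q) = p := div_mul_cancel₀ _ hpq.ne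
  obtain ⟨y, hy, hym⟩ := h t ⟨div_nonneg_of_nonpos hp hpq.le,
    (div_le_one_of_neg hpq).2 (by linarith)⟩
  have hfy : (p + q) * m ≤ f y :=
    calc (p + q) * m ≤ (p + q) * (t * y.1 + (1 - t) * y.2) :=
          mul_le_mul_of_nonpos_left hym hpq.le
      _ = f y := by rw [hf]; linear_combination (y.1 - y.2) * ht
  linarith [hfW y hy]

theorem Matrix.trace_transpose_mul_smul_add_smul_mul {m n : Type*} [Fintype m] [Fintype n]
    (U : Matrix m n ℝ) (A B : Matrix m m ℝ) (a b : ℝ) :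
    trace (Uᵀ * (a • A + b • B) * U) = a * trace (Uᵀ * A * U) + b * trace (Uᵀ * B * U) := by
  simp [Matrix.mul_add, Matrix.add_mul, trace_add, trace_smul]

/-- If `t_*` maximizes `φ(t) = Σ_{i=1}^r λ_i(t H_A + (1−t) H_B)` over `[0,1]`, and
`y_* = (Tr(U_*ᵀ H_A U_*), Tr(U_*ᵀ H_B U_*))` attains `min_{y ∈ W} max{y₁,y₂}` over the
(convex) joint numerical range `W = W_r(H_A,H_B)`, then
`t_*·y_{*1} + (1−t_*)·y_{*2} = φ(t_*)`, i.e. `Tr(U_*ᵀ H(t_*) U_*)` equals the sum of the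
`r` smallest eigenvalues of `H(t_*) = t_* H_A + (1−t_*) H_B`. -/
theorem optimal_trace_eq_sum_smallest_eigenvalues
    (n r : ℕ) (hr : r ≤ n)
    (HA HB : Matrix (Fin n) (Fin n) ℝ)
    (hA : HA.IsHermitian) (hB : HB.IsHermitian)
    (W : Set (ℝ × ℝ))
    (hW : W = {y : ℝ × ℝ | ∃ U : Matrix (Fin n) (Fin r) ℝ, Uᵀ * U = 1 ∧
      y = (Matrix.trace (Uᵀ * HA * U), Matrix.trace (Uᵀ * HB * U))})
    (hWconv : Convex ℝ W) (hWcomp : IsCompact W)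
    (tstar : ℝ) (htstar : tstar ∈ Set.Icc (0 : ℝ) 1)
    (htmax : ∀ t ∈ Set.Icc (0 : ℝ) 1,
      (∑ i : Fin r, sortedEigenvalues (t • HA + (1 - t) • HB)
          (comb_isHermitian HA HB hA hB t) (Fin.castLE hr i))
        ≤ ∑ i : Fin r, sortedEigenvalues (tstar • HA + (1 - tstar) • HB)
            (comb_isHermitian HA HB hA hB tstar) (Fin.castLE hr i))
    (Ustar : Matrix (Fin n) (Fin r) ℝ) (hUstar : Ustarᵀ * Ustar = 1)
    (hymin : ∀ y ∈ W,
      max (Matrix.trace (Ustarᵀ * HA * Ustar)) (Matrix.trace (Ustarᵀ * HB * Ustar))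
        ≤ max y.1 y.2) :
    Matrix.trace (Ustarᵀ * (tstar • HA + (1 - tstar) • HB) * Ustar)
      = ∑ i : Fin r, sortedEigenvalues (tstar • HA + (1 - tstar) • HB)
          (comb_isHermitian HA HB hA hB tstar) (Fin.castLE hr i) := by
  subst hW
  obtain ⟨y, hyW, hy⟩ := exists_mem_max_le_of_forall_combo_le hWconv hWcomp fun t ht => by
    obtain ⟨U, hU, hUt⟩ :=
      exists_trace_eq_sum_sortedEigenvalues hr (comb_isHermitian HA HB hA hB t)
    refine ⟨_, ⟨U, hU, rfl⟩, ?_⟩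
    rw [← trace_transpose_mul_smul_add_smul_mul, hUt]
    exact htmax t ht
  refine le_antisymm ?_ (sum_sortedEigenvalues_le_trace hr _ hUstar)
  calc _ = tstar * trace (Ustarᵀ * HA * Ustar) + (1 - tstar) * trace (Ustarᵀ * HB * Ustar) :=
        trace_transpose_mul_smul_add_smul_mul _ _ _ _ _
    _ ≤ max (trace (Ustarᵀ * HA * Ustar)) (trace (Ustarᵀ * HB * Ustar)) :=
        Convex.combo_le_max _ _ htstar.1 (sub_nonneg.2 htstar.2) (add_sub_cancel _ _)
    _ ≤ max y.1 y.2 := hymin y hyW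
    _ ≤ _ := hy
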